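/- arXiv:2405.16061 — 2 statements merged into one kernel-verified Lean document; each statement's English description precedes it below -/
import Mathlib

section
/- Let k'/k be a finite extension of finite fields, G a finite group, and b a block idempotent of the group algebra kG. Let Gal(k'/k) act on k'G by applying each field automorphism to the coefficients. Then Gal(k'/k) acts transitively on the set of block idempotents b' of k'G for which b'·ι(b) ≠ 0, where ι : kG → k'G is the inclusion induced by k ⊆ k'; that is, for any two block idempotents b', b'' of k'G with b'ι(b) ≠ 0 and b''ι(b) ≠ 0, there exists σ ∈ Gal(k'/k) with σ(b') = b''. -/
noncomputable section Blocks
namespace GalDesc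

variable {k k' : Type} [CommRing k] [CommRing k'] (G : Type) [Monoid G]

/-- Applying a ring homomorphism `f : k →+* k'` to the coefficients of elements of the
monoid algebra `kG` gives a ring homomorphism `kG →+* k'G`, `Σ aₘ·m ↦ Σ f(aₘ)·m`. -/
def mapCoeffs (f : k →+* k') : MonoidAlgebra k G →+* MonoidAlgebra k' G :=
  MonoidAlgebra.liftNCRingHom (MonoidAlgebra.singleOneRingHom.comp f)
    (MonoidAlgebra.of k' G) (fun b a => by
      show MonoidAlgebra.single (1 : G) (f b) * MonoidAlgebra.single a (1 : k') =
        MonoidAlgebra.single a (1 : k') * MonoidAlgebra.single (1 : G) (f b)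
      rw [MonoidAlgebra.single_mul_single, MonoidAlgebra.single_mul_single,
        one_mul, mul_one, one_mul, mul_one])

lemma mapCoeffs_single (f : k →+* k') (g : G) (a : k) :
    mapCoeffs G f (MonoidAlgebra.single g a) = MonoidAlgebra.single g (f a) := by
  simp [mapCoeffs, MonoidAlgebra.liftNCRingHom, MonoidAlgebra.liftNC_single,
    MonoidAlgebra.single_mul_single]

/-- A block idempotent of `kG`: a primitive idempotent of the center, i.e. a nonzero
central idempotent which cannot be written as a sum of two nonzero orthogonal central
idempotents. -/
def IsBlockIdempotent (e : MonoidAlgebra k G) : Prop :=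
  e ∈ Subalgebra.center k (MonoidAlgebra k G) ∧ IsIdempotentElem e ∧ e ≠ 0 ∧
    ∀ f g : MonoidAlgebra k G,
      f ∈ Subalgebra.center k (MonoidAlgebra k G) →
      g ∈ Subalgebra.center k (MonoidAlgebra k G) →
      IsIdempotentElem f → IsIdempotentElem g → f ≠ 0 → g ≠ 0 →
      f * g = 0 → g * f = 0 → e ≠ f + g

end GalDesc
end Blocks

open GalDesc

noncomputable section GalAuxSec
namespace GalAux
open GalDesc

variable {k k' : Type} [CommRing k] [CommRing k'] {G : Type} [Monoid G]

lemma mapCoeffs_apply (f : k →+* k') (x : MonoidAlgebra k G) (g : G) :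
    (mapCoeffs G f x).coeff g = f (x.coeff g) := by
  induction x using MonoidAlgebra.induction with
  | zero => simp
  | single_add a bb x ha hb ih =>
      rw [map_add, MonoidAlgebra.coeff_add, MonoidAlgebra.coeff_add, Finsupp.add_apply, Finsupp.add_apply, map_add, ih, mapCoeffs_single]
      congr 1
      classical
      rw [MonoidAlgebra.coeff_single, MonoidAlgebra.coeff_single, Finsupp.single_apply, Finsupp.single_apply, apply_ite f, map_zero]

lemma mapCoeffs_injective (f : k →+* k') (hf : Function.Injective f) :
    Function.Injective (mapCoeffs G f) := fun x y h =>
  MonoidAlgebra.ext (Finsupp.ext fun g => hf (by rw [← mapCoeffs_apply, ← mapCoeffs_apply, h]))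

/-- Lemma A: a block idempotent absorbs any central idempotent it meets. -/
lemma block_mul_central {e u : MonoidAlgebra k G} (he : IsBlockIdempotent G e)
    (huc : u ∈ Subalgebra.center k (MonoidAlgebra k G)) (hu : IsIdempotentElem u)
    (h : e * u ≠ 0) : e * u = e := by
  obtain ⟨hec, hei, hene, hprim⟩ := he
  have hcomm := Subalgebra.mem_center_iff.mp huc
  have hecomm := Subalgebra.mem_center_iff.mp hec
  by_contra hne
  have hgne : e - e * u ≠ 0 := fun h0 => hne (sub_eq_zero.mp h0).symm
  have h1 : e * u * e = e * u := by
    rw [mul_assoc, ← hcomm e, ← mul_assoc, hei.eq]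
  have h2 : e * (e * u) = e * u := by rw [← mul_assoc, hei.eq]
  have hfidem : IsIdempotentElem (e * u) := by
    show e * u * (e * u) = e * u
    rw [← mul_assoc, h1, mul_assoc, hu.eq]
  have hgidem : IsIdempotentElem (e - e * u) := by
    show (e - e * u) * (e - e * u) = e - e * u
    rw [mul_sub, sub_mul, sub_mul, hei.eq, h1, hfidem.eq, h2]
    abel
  have hfg : (e * u) * (e - e * u) = 0 := by
    rw [mul_sub, h1, hfidem.eq, sub_self]
  have hgf : (e - e * u) * (e * u) = 0 := by
    rw [sub_mul, h2, hfidem.eq, sub_self]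
  exact hprim (e * u) (e - e * u)
    (Subalgebra.mul_mem _ hec huc)
    (Subalgebra.sub_mem _ hec (Subalgebra.mul_mem _ hec huc))
    hfidem hgidem h hgne hfg hgf (by abel)

/-- Lemma B: two block idempotents with nonzero product are equal. -/
lemma block_eq_of_mul_ne_zero {e f : MonoidAlgebra k G} (he : IsBlockIdempotent G e)
    (hf : IsBlockIdempotent G f) (h : e * f ≠ 0) : e = f := by
  have hef : e * f = f * e := (Subalgebra.mem_center_iff.mp he.1 f).symm
  have h1 : e * f = e := block_mul_central he hf.1 hf.2.1 h
  have h2 : f * e = f := block_mul_central hf he.1 he.2.1 (by rwa [← hef])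
  rw [← h1, hef, h2]


section Fields

variable {k k' : Type} [Field k] [Field k'] [Algebra k k'] {G : Type} [Monoid G]

lemma mapCoeffs_algEquiv_symm (σ : k' ≃ₐ[k] k') (x : MonoidAlgebra k' G) :
    mapCoeffs G (σ.symm : k' →+* k') (mapCoeffs G (σ : k' →+* k') x) = x :=
  MonoidAlgebra.ext (Finsupp.ext fun g => by simp [mapCoeffs_apply])

lemma mapCoeffs_algEquiv_symm' (σ : k' ≃ₐ[k] k') (x : MonoidAlgebra k' G) :
    mapCoeffs G (σ : k' →+* k') (mapCoeffs G (σ.symm : k' →+* k') x) = x :=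
  MonoidAlgebra.ext (Finsupp.ext fun g => by simp [mapCoeffs_apply])

lemma mapCoeffs_algEquiv_center (σ : k' ≃ₐ[k] k') {e : MonoidAlgebra k' G}
    (he : e ∈ Subalgebra.center k' (MonoidAlgebra k' G)) :
    mapCoeffs G (σ : k' →+* k') e ∈ Subalgebra.center k' (MonoidAlgebra k' G) := by
  rw [Subalgebra.mem_center_iff] at he ⊢
  intro y
  conv_lhs => rw [← mapCoeffs_algEquiv_symm' σ y]
  conv_rhs => rw [← mapCoeffs_algEquiv_symm' σ y]
  rw [← map_mul, ← map_mul, he]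

lemma mapCoeffs_algEquiv_block (σ : k' ≃ₐ[k] k') {e : MonoidAlgebra k' G}
    (he : IsBlockIdempotent G e) :
    IsBlockIdempotent G (mapCoeffs G (σ : k' →+* k') e) := by
  obtain ⟨hc, hi, hn, hp⟩ := he
  refine ⟨mapCoeffs_algEquiv_center σ hc, ?_, ?_, ?_⟩
  · show _ * _ = _
    rw [← map_mul, hi.eq]
  · intro h0
    exact hn (mapCoeffs_injective _ (σ : k' →+* k').injective
      (by rw [h0, map_zero]))
  · intro f g hfc hgc hfi hgi hfn hgn hfg hgf heq
    refine hp (mapCoeffs G (σ.symm : k' →+* k') f) (mapCoeffs G (σ.symm : k' →+* k') g)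
      (mapCoeffs_algEquiv_center σ.symm hfc) (mapCoeffs_algEquiv_center σ.symm hgc)
      ?_ ?_ ?_ ?_ ?_ ?_ ?_
    · show _ * _ = _
      rw [← map_mul, hfi.eq]
    · show _ * _ = _
      rw [← map_mul, hgi.eq]
    · exact fun h0 => hfn (mapCoeffs_injective _ (σ.symm : k' →+* k').injective
        (by rw [h0, map_zero]))
    · exact fun h0 => hgn (mapCoeffs_injective _ (σ.symm : k' →+* k').injective
        (by rw [h0, map_zero]))
    · rw [← map_mul, hfg, map_zero]
    · rw [← map_mul, hgf, map_zero]
    · rw [← map_add, ← heq, mapCoeffs_algEquiv_symm]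

lemma mapCoeffs_algebraMap_fixed (σ : k' ≃ₐ[k] k') (x : MonoidAlgebra k G) :
    mapCoeffs G (σ : k' →+* k') (mapCoeffs G (algebraMap k k') x)
      = mapCoeffs G (algebraMap k k') x :=
  MonoidAlgebra.ext (Finsupp.ext fun g => by simp [mapCoeffs_apply])

lemma mapCoeffs_algebraMap_center {e : MonoidAlgebra k G}
    (he : e ∈ Subalgebra.center k (MonoidAlgebra k G)) :
    mapCoeffs G (algebraMap k k') e ∈ Subalgebra.center k' (MonoidAlgebra k' G) := by
  rw [Subalgebra.mem_center_iff] at he ⊢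
  intro y
  induction y using MonoidAlgebra.induction with
  | zero => simp
  | single_add a c y _ _ ih =>
    rw [add_mul, mul_add, ih]
    congr 1
    show MonoidAlgebra.single a c * mapCoeffs G (algebraMap k k') e
      = mapCoeffs G (algebraMap k k') e * MonoidAlgebra.single a c
    have hs : (MonoidAlgebra.single a c : MonoidAlgebra k' G)
        = MonoidAlgebra.single (1 : G) c * MonoidAlgebra.single a (1 : k') := by
      rw [MonoidAlgebra.single_mul_single, one_mul, mul_one]
    have h1 : MonoidAlgebra.single a (1 : k') * mapCoeffs G (algebraMap k k') e
        = mapCoeffs G (algebraMap k k') e * MonoidAlgebra.single a (1 : k') := by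
      have hh : (MonoidAlgebra.single a (1 : k') : MonoidAlgebra k' G)
          = mapCoeffs G (algebraMap k k') (MonoidAlgebra.single a (1 : k)) := by
        rw [mapCoeffs_single, map_one]
      rw [hh, ← map_mul, ← map_mul, he]
    rw [hs, mul_assoc, h1, ← mul_assoc,
      MonoidAlgebra.single_one_comm c (mapCoeffs G (algebraMap k k') e), mul_assoc]

lemma fixed_descend [Finite k'] {x : MonoidAlgebra k' G}
    (h : ∀ σ : k' ≃ₐ[k] k', mapCoeffs G (σ : k' →+* k') x = x) :
    ∃ y : MonoidAlgebra k G, mapCoeffs G (algebraMap k k') y = x := by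
  classical
  have hrange : ∀ g : G, x.coeff g ∈ Set.range (algebraMap k k') := by
    intro g
    have hfix : ∀ σ : k' ≃ₐ[k] k', σ (x.coeff g) = x.coeff g := fun σ => by
      conv_rhs => rw [← h σ]
      rw [mapCoeffs_apply]
      rfl
    have hgal : IntermediateField.fixedField (⊤ : Subgroup (k' ≃ₐ[k] k')) = ⊥ :=
      ((IsGalois.tfae (F := k) (E := k')).out 0 1).mp (inferInstance : IsGalois k k')
    have hmem : x.coeff g ∈ IntermediateField.fixedField (⊤ : Subgroup (k' ≃ₐ[k] k')) :=
      fun σ => hfix σ.1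
    rw [hgal, IntermediateField.mem_bot] at hmem
    exact hmem
  set χ : k' → k := fun a => if h : a ∈ Set.range (algebraMap k k') then h.choose else 0
    with hχ
  have hχ0 : χ 0 = 0 := by
    rw [hχ]
    have h0 : (0 : k') ∈ Set.range (algebraMap k k') := ⟨0, map_zero _⟩
    simp only [dif_pos h0]
    have := h0.choose_spec
    exact (algebraMap k k').injective (by rw [this, map_zero])
  refine ⟨MonoidAlgebra.ofCoeff (x.coeff.mapRange χ hχ0), MonoidAlgebra.ext (Finsupp.ext fun g => ?_)⟩
  rw [mapCoeffs_apply, MonoidAlgebra.coeff_ofCoeff, Finsupp.mapRange_apply, hχ]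
  simp only [dif_pos (hrange g)]
  exact (hrange g).choose_spec

end Fields

end GalAux
end GalAuxSec

/-- **Statement 8.** Let `k'/k` be a finite extension of finite fields, `G` a finite group,
`b` a block idempotent of `kG`. Then `Gal(k'/k)` (acting on coefficients) acts transitively
on the block idempotents `b'` of `k'G` with `b'·ι(b) ≠ 0`. -/
theorem gal_transitive_on_blocks_over
    (k k' : Type) [Field k] [Field k'] [Finite k] [Finite k'] [Algebra k k']
    (G : Type) [Group G] [Finite G]
    (b : MonoidAlgebra k G) (hb : IsBlockIdempotent G b)
    (b' b'' : MonoidAlgebra k' G)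
    (hb' : IsBlockIdempotent G b') (hb'' : IsBlockIdempotent G b'')
    (hne' : b' * mapCoeffs G (algebraMap k k') b ≠ 0)
    (hne'' : b'' * mapCoeffs G (algebraMap k k') b ≠ 0) :
    ∃ σ : k' ≃ₐ[k] k', mapCoeffs G (σ : k' →+* k') b' = b'' := by
  classical
  haveI : Finite (k' ≃ₐ[k] k') :=
    Finite.of_injective (fun σ => (σ : k' → k')) DFunLike.coe_injective
  haveI := Fintype.ofFinite (k' ≃ₐ[k] k')
  set ι : MonoidAlgebra k G →+* MonoidAlgebra k' G := mapCoeffs G (algebraMap k k')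
    with hιdef
  set Φ : (k' ≃ₐ[k] k') → MonoidAlgebra k' G :=
    fun σ => mapCoeffs G (σ : k' →+* k') b' with hΦ
  set S : Finset (MonoidAlgebra k' G) := Finset.image Φ Finset.univ with hS
  have hmemS : ∀ t, t ∈ S ↔ ∃ τ : k' ≃ₐ[k] k', Φ τ = t := by
    intro t
    rw [hS, Finset.mem_image]
    simp only [Finset.mem_univ, true_and]
  have hSblock : ∀ t ∈ S, IsBlockIdempotent G t := by
    intro t ht
    obtain ⟨σ, rfl⟩ := (hmemS t).mp ht
    exact GalAux.mapCoeffs_algEquiv_block σ hb'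
  have hb'S : b' ∈ S := by
    refine (hmemS b').mpr ⟨AlgEquiv.refl, ?_⟩
    exact MonoidAlgebra.ext (Finsupp.ext fun g => by simp [hΦ, GalAux.mapCoeffs_apply])
  have horth : ∀ t ∈ S, ∀ s ∈ S, t ≠ s → t * s = 0 := by
    intro t ht s hs hts
    by_contra h0
    exact hts (GalAux.block_eq_of_mul_ne_zero (hSblock t ht) (hSblock s hs) h0)
  set c : MonoidAlgebra k' G := ∑ t ∈ S, t with hc
  have hmulc : ∀ t ∈ S, t * c = t := by
    intro t ht
    rw [hc, Finset.mul_sum,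
      Finset.sum_eq_single_of_mem t ht (fun s hs hst => horth t ht s hs hst.symm)]
    exact (hSblock t ht).2.1.eq
  have hcc : c * c = c := by
    conv_lhs => rw [hc, Finset.sum_mul]
    rw [Finset.sum_congr rfl hmulc, ← hc]
  have hccentral : c ∈ Subalgebra.center k' (MonoidAlgebra k' G) := by
    rw [hc]
    exact Subalgebra.sum_mem _ fun t ht => (hSblock t ht).1
  have hcomp : ∀ σ τ : k' ≃ₐ[k] k',
      mapCoeffs G (σ : k' →+* k') (Φ τ) = Φ (τ.trans σ) := fun σ τ =>
    MonoidAlgebra.ext (Finsupp.ext fun g => by simp [hΦ, GalAux.mapCoeffs_apply])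
  have hfixS : ∀ σ : k' ≃ₐ[k] k',
      Finset.image (mapCoeffs G (σ : k' →+* k')) S = S := by
    intro σ
    apply Finset.ext
    intro t
    rw [Finset.mem_image]
    constructor
    · rintro ⟨s, hs, rfl⟩
      obtain ⟨τ, rfl⟩ := (hmemS s).mp hs
      exact (hmemS _).mpr ⟨τ.trans σ, (hcomp σ τ).symm⟩
    · intro ht
      obtain ⟨τ, rfl⟩ := (hmemS t).mp ht
      refine ⟨Φ (τ.trans σ.symm), (hmemS _).mpr ⟨τ.trans σ.symm, rfl⟩, ?_⟩
      rw [hcomp]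
      congr 1
      ext a
      simp
  have hfixc : ∀ σ : k' ≃ₐ[k] k', mapCoeffs G (σ : k' →+* k') c = c := by
    intro σ
    have hinj : ∀ x ∈ S, ∀ y ∈ S,
        mapCoeffs G (σ : k' →+* k') x = mapCoeffs G (σ : k' →+* k') y → x = y :=
      fun x _ y _ h => GalAux.mapCoeffs_injective _ (σ : k' →+* k').injective h
    have himg : ∑ x ∈ Finset.image (mapCoeffs G (σ : k' →+* k')) S, x
        = ∑ x ∈ S, mapCoeffs G (σ : k' →+* k') x := Finset.sum_image hinj
    rw [hc, map_sum, ← himg, hfixS σ, ← hc]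
  obtain ⟨c₀, hc₀⟩ := GalAux.fixed_descend hfixc
  have hinjι : Function.Injective ι :=
    GalAux.mapCoeffs_injective _ (algebraMap k k').injective
  have hcne : c ≠ 0 := fun h0 => hb'.2.2.1 (by rw [← hmulc b' hb'S, h0, mul_zero])
  have hιb_central : ι b ∈ Subalgebra.center k' (MonoidAlgebra k' G) :=
    GalAux.mapCoeffs_algebraMap_center hb.1
  have hιb_idem : IsIdempotentElem (ι b) := by
    show ι b * ι b = ι b
    rw [← map_mul, hb.2.1.eq]
  have hb'ιb : b' * ι b = b' := GalAux.block_mul_central hb' hιb_central hιb_idem hne'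
  have ht_ιb : ∀ t ∈ S, t * ι b = t := by
    intro t ht
    obtain ⟨τ, rfl⟩ := (hmemS t).mp ht
    calc Φ τ * ι b = mapCoeffs G (τ : k' →+* k') b' * mapCoeffs G (τ : k' →+* k') (ι b) := by
          rw [hιdef, GalAux.mapCoeffs_algebraMap_fixed]
      _ = mapCoeffs G (τ : k' →+* k') (b' * ι b) := (map_mul _ _ _).symm
      _ = Φ τ := by rw [hb'ιb]
  have hcιb : c * ι b = c := by
    conv_lhs => rw [hc, Finset.sum_mul]
    rw [Finset.sum_congr rfl ht_ιb, ← hc]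
  have hc₀b : c₀ * b = c₀ := hinjι (by rw [map_mul, hc₀, hcιb])
  have hc₀idem : IsIdempotentElem c₀ := by
    show c₀ * c₀ = c₀
    exact hinjι (by rw [map_mul, hc₀, hcc])
  have hc₀ne : c₀ ≠ 0 := fun h0 => hcne (by rw [← hc₀, h0, map_zero])
  have hc₀central : c₀ ∈ Subalgebra.center k (MonoidAlgebra k G) := by
    rw [Subalgebra.mem_center_iff]
    intro y
    apply hinjι
    rw [map_mul, map_mul, hc₀, Subalgebra.mem_center_iff.mp hccentral (ι y)]
  have hbc₀ : b * c₀ = c₀ := by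
    rw [← Subalgebra.mem_center_iff.mp hb.1 c₀, hc₀b]
  have hbeq : b = c₀ := by
    by_contra hne
    have hgne : b - c₀ ≠ 0 := fun h0 => hne (sub_eq_zero.mp h0)
    have hgidem : IsIdempotentElem (b - c₀) := by
      show (b - c₀) * (b - c₀) = b - c₀
      rw [mul_sub, sub_mul, sub_mul, hb.2.1.eq, hbc₀, hc₀b, hc₀idem.eq]
      abel
    have hfg : c₀ * (b - c₀) = 0 := by rw [mul_sub, hc₀b, hc₀idem.eq, sub_self]
    have hgf : (b - c₀) * c₀ = 0 := by rw [sub_mul, hbc₀, hc₀idem.eq, sub_self]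
    exact hb.2.2.2 c₀ (b - c₀) hc₀central
      (Subalgebra.sub_mem _ hb.1 hc₀central) hc₀idem hgidem hc₀ne hgne hfg hgf (by abel)
  have hιbc : ι b = c := by rw [hbeq, hc₀]
  have hb''c : b'' * c = b'' := by
    rw [← hιbc]
    exact GalAux.block_mul_central hb'' hιb_central hιb_idem hne''
  have hb''S : b'' ∈ S := by
    by_contra hnS
    have h0 : b'' * c = 0 := by
      rw [hc, Finset.mul_sum]
      apply Finset.sum_eq_zero
      intro t ht
      by_contra hne0
      exact hnS ((GalAux.block_eq_of_mul_ne_zero hb'' (hSblock t ht) hne0) ▸ ht)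
    exact hb''.2.2.1 (by rw [← hb''c, h0])
  obtain ⟨σ, hσ⟩ := (hmemS b'').mp hb''S
  exact ⟨σ, hσ⟩
end

section
/- Let k'/k be an extension of finite fields of prime degree ℓ, G a finite group, and b a block idempotent of kG. Then the set of block idempotents b' of k'G with b'·ι(b) ≠ 0 (where ι : kG → k'G is the inclusion) has cardinality either 1 or ℓ; moreover, in the latter case the action of the cyclic group Gal(k'/k) (acting on k'G via the coefficients) on this set is transitive and faithful. -/
noncomputable section Blocks
namespace GalDesc

variable {k k' : Type} [CommRing k] [CommRing k'] (G : Type) [Monoid G]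

/- ### Auxiliary lemmas -/

lemma mapCoeffs_eq_mapRange (f : k →+* k') (x : MonoidAlgebra k G) :
    (mapCoeffs G f x).coeff = Finsupp.mapRange f (map_zero f) x.coeff := by
  induction x using MonoidAlgebra.induction with
  | zero => simp [map_zero]
  | single_add a b s _ _ ih =>
    rw [map_add, MonoidAlgebra.coeff_add, MonoidAlgebra.coeff_add,
      Finsupp.mapRange_add (map_add f), ih, mapCoeffs_single, MonoidAlgebra.coeff_single,
      MonoidAlgebra.coeff_single, Finsupp.mapRange_single]

lemma mapCoeffs_apply (f : k →+* k') (x : MonoidAlgebra k G) (g : G) :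
    (mapCoeffs G f x).coeff g = f (x.coeff g) := by
  rw [mapCoeffs_eq_mapRange]; simp

lemma mapCoeffs_injective (f : k →+* k') (hf : Function.Injective f) :
    Function.Injective (mapCoeffs G f) := by
  intro x y h
  ext g
  apply hf
  rw [← mapCoeffs_apply, ← mapCoeffs_apply, h]

lemma mapCoeffs_comp_apply {k'' : Type} [CommRing k''] (f : k' →+* k'') (g : k →+* k')
    (x : MonoidAlgebra k G) :
    mapCoeffs G f (mapCoeffs G g x) = mapCoeffs G (f.comp g) x := by
  ext a
  rw [mapCoeffs_apply, mapCoeffs_apply, mapCoeffs_apply]; rfl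

lemma mapCoeffs_id_apply (x : MonoidAlgebra k G) :
    mapCoeffs G (RingHom.id k) x = x := by
  ext a
  rw [mapCoeffs_apply]; rfl

variable {G}

lemma central_comm {a : MonoidAlgebra k G} (ha : a ∈ Subalgebra.center k (MonoidAlgebra k G))
    (b : MonoidAlgebra k G) : b * a = a * b := (Subalgebra.mem_center_iff.1 ha) b

lemma prod_formula {A : Type} [Ring A] {x u : A} (v : A) (hx : x * x = x) (hu : u * x = x * u) :
    (x * u) * (x * v) = x * (u * v) := by
  rw [mul_assoc, ← mul_assoc u x v, hu, mul_assoc x u v, ← mul_assoc, hx]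

/-- a block idempotent absorbs any central idempotent it doesn't annihilate -/
lemma block_mul_eq_self {x y : MonoidAlgebra k G} (hx : IsBlockIdempotent G x)
    (hyc : y ∈ Subalgebra.center k (MonoidAlgebra k G)) (hyi : IsIdempotentElem y)
    (hxy0 : x * y ≠ 0) : x * y = x := by
  obtain ⟨hxc, hxi, hxn, hxp⟩ := hx
  have hcxy : y * x = x * y := (central_comm hyc x).symm
  have h1 : (x * y) * (x * y) = x * y := by
    rw [prod_formula y hxi hcxy, hyi]
  have h1y : ((1 : MonoidAlgebra k G) - y) * x = x * (1 - y) := by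
    rw [sub_mul, mul_sub, one_mul, mul_one, hcxy]
  have h2 : (x * (1 - y)) * (x * (1 - y)) = x * (1 - y) := by
    rw [prod_formula (1 - y) hxi h1y, (IsIdempotentElem.one_sub hyi)]
  have h3 : (x * y) * (x * (1 - y)) = 0 := by
    rw [prod_formula (1 - y) hxi hcxy, mul_sub, mul_one, hyi, sub_self, mul_zero]
  have h4 : (x * (1 - y)) * (x * y) = 0 := by
    rw [prod_formula y hxi h1y, sub_mul, one_mul, hyi, sub_self, mul_zero]
  have hsum : x = x * y + x * (1 - y) := by rw [mul_sub, mul_one]; abel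
  by_contra hne'
  have hxy1 : x * (1 - y) ≠ 0 := by
    intro hz
    exact hne' (by calc x * y = x * y + x * (1 - y) - x * (1 - y) := by abel
                  _ = x - x * (1 - y) := by rw [← hsum]
                  _ = x := by rw [hz, sub_zero])
  have hxyc : x * y ∈ Subalgebra.center k (MonoidAlgebra k G) := Subalgebra.mul_mem _ hxc hyc
  have hx1yc : x * (1 - y) ∈ Subalgebra.center k (MonoidAlgebra k G) :=
    Subalgebra.mul_mem _ hxc (Subalgebra.sub_mem _ (Subalgebra.one_mem _) hyc)
  exact hxp (x * y) (x * (1 - y)) hxyc hx1yc h1 h2 hxy0 hxy1 h3 h4 hsum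

/-- distinct block idempotents are orthogonal -/
lemma blocks_orthogonal {e f : MonoidAlgebra k G} (he : IsBlockIdempotent G e)
    (hf : IsBlockIdempotent G f) (hne : e ≠ f) : e * f = 0 := by
  by_contra h0
  have hc : e * f = f * e := (central_comm hf.1 e)
  have h1 : e * f = e := block_mul_eq_self he hf.1 hf.2.1 h0
  have h2 : f * e = f := block_mul_eq_self hf he.1 he.2.1 (by rwa [← hc])
  exact hne (by rw [← h1, hc, h2])

lemma block_mul_finset_sum_mem {T : Finset (MonoidAlgebra k G)}
    (hT : ∀ c ∈ T, IsBlockIdempotent G c) {c : MonoidAlgebra k G} (hc : IsBlockIdempotent G c)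
    (hmem : c ∈ T) : c * (∑ x ∈ T, x) = c := by
  rw [Finset.mul_sum, Finset.sum_eq_single c
      (fun b hb hbne => blocks_orthogonal hc (hT b hb) (Ne.symm hbne))
      (fun h' => absurd hmem h'), hc.2.1]

lemma block_mul_finset_sum_not_mem {T : Finset (MonoidAlgebra k G)}
    (hT : ∀ c ∈ T, IsBlockIdempotent G c) {c : MonoidAlgebra k G} (hc : IsBlockIdempotent G c)
    (hmem : c ∉ T) : c * (∑ x ∈ T, x) = 0 := by
  rw [Finset.mul_sum]
  exact Finset.sum_eq_zero fun b hb =>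
    blocks_orthogonal hc (hT b hb) (fun hcb => hmem (hcb ▸ hb))

set_option linter.unusedSectionVars false in
lemma finite_monoidAlgebra [Finite k] [Finite G] : Finite (MonoidAlgebra k G) :=
  Finite.of_injective (fun x : MonoidAlgebra k G => Finsupp.equivFunOnFinite (x.coeff : G →₀ k))
    fun _ _ h => MonoidAlgebra.coeff_injective (Finsupp.equivFunOnFinite.injective h)

set_option maxHeartbeats 1000000 in
lemma decomp_into_blocks [Finite k] [Finite G] (e : MonoidAlgebra k G)
    (hc : e ∈ Subalgebra.center k (MonoidAlgebra k G)) (hi : IsIdempotentElem e) (hn : e ≠ 0) :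
    ∃ T : Finset (MonoidAlgebra k G), (∀ c ∈ T, IsBlockIdempotent G c) ∧ e = ∑ x ∈ T, x := by
  classical
  have hfin : Finite (MonoidAlgebra k G) := finite_monoidAlgebra
  set S : MonoidAlgebra k G → Set (MonoidAlgebra k G) := fun e =>
    {x | x ∈ Subalgebra.center k (MonoidAlgebra k G) ∧ IsIdempotentElem x ∧ x ≠ 0 ∧ x * e = x}
    with hS
  suffices H : ∀ n (e : MonoidAlgebra k G), (S e).ncard ≤ n →
      e ∈ Subalgebra.center k (MonoidAlgebra k G) → IsIdempotentElem e → e ≠ 0 →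
      ∃ T : Finset (MonoidAlgebra k G), (∀ c ∈ T, IsBlockIdempotent G c) ∧ e = ∑ x ∈ T, x by
    exact H ((S e).ncard) e le_rfl hc hi hn
  intro n
  induction n with
  | zero =>
    intro e hle hc hi hn
    exfalso
    have he : e ∈ S e := ⟨hc, hi, hn, hi⟩
    have hpos : 0 < (S e).ncard := (Set.ncard_pos (Set.toFinite _)).2 ⟨e, he⟩
    omega
  | succ n ih =>
    intro e hle hc hi hn
    by_cases hp : ∀ f g : MonoidAlgebra k G,
        f ∈ Subalgebra.center k (MonoidAlgebra k G) →
        g ∈ Subalgebra.center k (MonoidAlgebra k G) →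
        IsIdempotentElem f → IsIdempotentElem g → f ≠ 0 → g ≠ 0 →
        f * g = 0 → g * f = 0 → e ≠ f + g
    · refine ⟨{e}, ?_, by simp⟩
      intro c hcm
      rw [Finset.mem_singleton] at hcm
      subst hcm
      exact ⟨hc, hi, hn, hp⟩
    · push_neg at hp
      obtain ⟨f, g, hfc, hgc, hfi, hgi, hfn, hgn, hfg, hgf, heq⟩ := hp
      have hxg : ∀ x, x * f = x → x * g = 0 := fun x hx => by
        rw [← hx, mul_assoc, hfg, mul_zero]
      have hxf : ∀ x, x * g = x → x * f = 0 := fun x hx => by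
        rw [← hx, mul_assoc, hgf, mul_zero]
      have hsub_f : S f ⊆ S e := by
        rintro x ⟨hxc, hxi, hxn, hxmul⟩
        exact ⟨hxc, hxi, hxn, by rw [heq, mul_add, hxmul, hxg x hxmul, add_zero]⟩
      have hsub_g : S g ⊆ S e := by
        rintro x ⟨hxc, hxi, hxn, hxmul⟩
        exact ⟨hxc, hxi, hxn, by rw [heq, mul_add, hxf x hxmul, hxmul, zero_add]⟩
      have hgmem : g ∈ S e := ⟨hgc, hgi, hgn, by rw [heq, mul_add, hgf, hgi, zero_add]⟩
      have hfmem : f ∈ S e := ⟨hfc, hfi, hfn, by rw [heq, mul_add, hfg, hfi, add_zero]⟩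
      have hgnot : g ∉ S f := fun ⟨_, _, _, hmul⟩ => hgn (by rw [← hmul, hgf])
      have hfnot : f ∉ S g := fun ⟨_, _, _, hmul⟩ => hfn (by rw [← hmul, hfg])
      have hlt_f : (S f).ncard < (S e).ncard :=
        Set.ncard_lt_ncard ((Set.ssubset_iff_of_subset hsub_f).2 ⟨g, hgmem, hgnot⟩)
          (Set.toFinite _)
      have hlt_g : (S g).ncard < (S e).ncard :=
        Set.ncard_lt_ncard ((Set.ssubset_iff_of_subset hsub_g).2 ⟨f, hfmem, hfnot⟩)
          (Set.toFinite _)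
      obtain ⟨Tf, hTf, hTfsum⟩ := ih f (by omega) hfc hfi hfn
      obtain ⟨Tg, hTg, hTgsum⟩ := ih g (by omega) hgc hgi hgn
      have hdisj : Disjoint Tf Tg := by
        rw [Finset.disjoint_left]
        intro c hcf hcg
        have h1 : c * f = c := by rw [hTfsum]; exact block_mul_finset_sum_mem hTf (hTf c hcf) hcf
        have h2 : c * g = c := by rw [hTgsum]; exact block_mul_finset_sum_mem hTg (hTg c hcg) hcg
        exact (hTf c hcf).2.2.1 (by rw [← h2, ← h1, mul_assoc, hfg, mul_zero])
      refine ⟨Tf ∪ Tg, ?_, ?_⟩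
      · intro c hcm
        rcases Finset.mem_union.1 hcm with h | h
        · exact hTf c h
        · exact hTg c h
      · rw [Finset.sum_union hdisj, ← hTfsum, ← hTgsum, heq]

lemma mapCoeffs_mem_center (f : k →+* k') {b : MonoidAlgebra k G}
    (hb : b ∈ Subalgebra.center k (MonoidAlgebra k G)) :
    mapCoeffs G f b ∈ Subalgebra.center k' (MonoidAlgebra k' G) := by
  rw [Subalgebra.mem_center_iff]
  intro w
  induction w using MonoidAlgebra.induction with
  | zero => simp
  | single_add a c s _ _ ih =>
    have hsingle : (MonoidAlgebra.single a c : MonoidAlgebra k' G) * mapCoeffs G f b =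
        mapCoeffs G f b * MonoidAlgebra.single a c := by
      have hdecomp : (MonoidAlgebra.single a c : MonoidAlgebra k' G) =
          MonoidAlgebra.single (1 : G) c * MonoidAlgebra.single a (1 : k') := by
        rw [MonoidAlgebra.single_mul_single, one_mul, mul_one]
      have h1 : ∀ z : MonoidAlgebra k' G,
          MonoidAlgebra.single (1 : G) c * z = z * MonoidAlgebra.single (1 : G) c :=
        fun z => MonoidAlgebra.single_one_comm c z
      have h2 : MonoidAlgebra.single a (1 : k') * mapCoeffs G f b =
          mapCoeffs G f b * MonoidAlgebra.single a (1 : k') := by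
        have hb2 : MonoidAlgebra.single a (1 : k) * b = b * MonoidAlgebra.single a (1 : k) :=
          (Subalgebra.mem_center_iff.1 hb) _
        have := congrArg (mapCoeffs G f) hb2
        rwa [map_mul, map_mul, mapCoeffs_single, map_one] at this
      rw [hdecomp, mul_assoc, h2, ← mul_assoc, h1, mul_assoc]
    show (_ + _) * _ = _ * (_ + _)
    rw [add_mul, mul_add, ih, hsingle]

end GalDesc

/- field-specific auxiliary lemmas -/
namespace GalDesc
variable {k k' : Type} [Field k] [Field k'] [Finite k] [Finite k'] [Algebra k k']
  {G : Type} [Monoid G]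

set_option linter.unusedSectionVars false in
lemma fixed_mem_range {x : k'} (hx : ∀ σ : k' ≃ₐ[k] k', σ x = x) :
    x ∈ Set.range (algebraMap k k') := by
  have fd : FiniteDimensional k k' := Module.Finite.of_finite
  have h2 : IntermediateField.fixedField
      (IntermediateField.fixingSubgroup (⊥ : IntermediateField k k')) = ⊥ :=
    IsGalois.fixedField_fixingSubgroup ⊥
  have h1 : x ∈ IntermediateField.fixedField
      (IntermediateField.fixingSubgroup (⊥ : IntermediateField k k')) := fun g => hx g
  rw [h2] at h1
  rwa [IntermediateField.mem_bot] at h1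

set_option linter.unusedSectionVars false in
lemma descent {x : MonoidAlgebra k' G}
    (hx : ∀ σ : k' ≃ₐ[k] k', mapCoeffs G (σ : k' →+* k') x = x) :
    ∃ y : MonoidAlgebra k G, mapCoeffs G (algebraMap k k') y = x := by
  classical
  have hcoeff : ∀ g : G, x.coeff g ∈ Set.range (algebraMap k k') := by
    intro g
    apply fixed_mem_range
    intro σ
    have := congrArg (fun z : MonoidAlgebra k' G => z.coeff g) (hx σ)
    simpa [mapCoeffs_apply] using this
  set r : k' → k := Function.invFun (algebraMap k k') with hr
  have hinj : Function.Injective (algebraMap k k') := (algebraMap k k').injective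
  have hr0 : r 0 = 0 := by
    have := Function.leftInverse_invFun hinj 0
    simpa [hr] using this
  refine ⟨MonoidAlgebra.ofCoeff (Finsupp.mapRange r hr0 x.coeff), ?_⟩
  ext g
  rw [mapCoeffs_apply, MonoidAlgebra.coeff_ofCoeff, Finsupp.mapRange_apply]
  exact Function.invFun_eq (hcoeff g)

set_option linter.unusedSectionVars false in
lemma coe_mul_alg (σ τ : k' ≃ₐ[k] k') :
    ((σ * τ : k' ≃ₐ[k] k') : k' →+* k') = (σ : k' →+* k').comp (τ : k' →+* k') :=
  RingHom.ext fun _ => rfl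

set_option linter.unusedSectionVars false in
lemma phi_mul (σ τ : k' ≃ₐ[k] k') (x : MonoidAlgebra k' G) :
    mapCoeffs G ((σ * τ : k' ≃ₐ[k] k') : k' →+* k') x =
      mapCoeffs G (σ : k' →+* k') (mapCoeffs G (τ : k' →+* k') x) := by
  rw [mapCoeffs_comp_apply, coe_mul_alg]

set_option linter.unusedSectionVars false in
lemma phi_one (x : MonoidAlgebra k' G) :
    mapCoeffs G ((1 : k' ≃ₐ[k] k') : k' →+* k') x = x := by
  ext g
  rw [mapCoeffs_apply]
  rfl

set_option linter.unusedSectionVars false in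
lemma phi_inj (σ : k' ≃ₐ[k] k') :
    Function.Injective (mapCoeffs G (σ : k' →+* k')) :=
  mapCoeffs_injective G _ σ.injective

set_option linter.unusedSectionVars false in
lemma phi_pow_fix {σ : k' ≃ₐ[k] k'} {x : MonoidAlgebra k' G}
    (h : mapCoeffs G (σ : k' →+* k') x = x) (n : ℕ) :
    mapCoeffs G ((σ ^ n : k' ≃ₐ[k] k') : k' →+* k') x = x := by
  induction n with
  | zero => exact phi_one x
  | succ n ih => rw [pow_succ, phi_mul, h, ih]

set_option linter.unusedSectionVars false in
/-- applying a Galois automorphism to the coefficients preserves block idempotents -/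
lemma block_map (σ : k' ≃ₐ[k] k') {e : MonoidAlgebra k' G} (he : IsBlockIdempotent G e) :
    IsBlockIdempotent G (mapCoeffs G (σ : k' →+* k') e) := by
  obtain ⟨hec, hei, hen, hep⟩ := he
  have hinv : ∀ z : MonoidAlgebra k' G,
      mapCoeffs G (σ : k' →+* k') (mapCoeffs G ((σ⁻¹ : k' ≃ₐ[k] k') : k' →+* k') z) = z := by
    intro z
    rw [← phi_mul, mul_inv_cancel, phi_one]
  refine ⟨mapCoeffs_mem_center _ hec, ?_, ?_, ?_⟩
  · show _ * _ = _
    rw [← map_mul, hei]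
  · intro h0
    exact hen (phi_inj σ (by rw [h0, map_zero]))
  · intro f g hfc hgc hfi hgi hfn hgn hfg hgf heq
    set ψ := mapCoeffs G ((σ⁻¹ : k' ≃ₐ[k] k') : k' →+* k') with hψ
    have hinv' : ∀ z : MonoidAlgebra k' G, ψ (mapCoeffs G (σ : k' →+* k') z) = z := by
      intro z
      rw [hψ, ← phi_mul, inv_mul_cancel, phi_one]
    have heq' : e = ψ f + ψ g := by
      have := congrArg ψ heq
      rwa [hinv', map_add] at this
    have hψinj : Function.Injective ψ := phi_inj _
    refine hep (ψ f) (ψ g) (mapCoeffs_mem_center _ hfc) (mapCoeffs_mem_center _ hgc)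
      ?_ ?_ ?_ ?_ ?_ ?_ heq'
    · show _ * _ = _
      rw [← map_mul, hfi]
    · show _ * _ = _
      rw [← map_mul, hgi]
    · intro h0
      exact hfn (hψinj (by rw [h0, map_zero]))
    · intro h0
      exact hgn (hψinj (by rw [h0, map_zero]))
    · rw [← map_mul, hfg, map_zero]
    · rw [← map_mul, hgf, map_zero]

set_option linter.unusedSectionVars false in
lemma pow_surj_of_ne_one {Γ : Type*} [Group Γ] [Finite Γ] {ℓ : ℕ} (hℓ : ℓ.Prime)
    (hcard : Nat.card Γ = ℓ) {ρ : Γ} (hρ : ρ ≠ 1) (τ : Γ) : ∃ n : ℕ, ρ ^ n = τ := by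
  have h1 : orderOf ρ ∣ ℓ := hcard ▸ orderOf_dvd_natCard ρ
  have h2 : orderOf ρ = ℓ := by
    rcases (Nat.Prime.eq_one_or_self_of_dvd hℓ _ h1) with h | h
    · exact absurd (orderOf_eq_one_iff.1 h) hρ
    · exact h
  have htop : Subgroup.zpowers ρ = ⊤ :=
    Subgroup.eq_top_of_card_eq _ (by rw [Nat.card_zpowers, h2, hcard])
  have hτ : τ ∈ Subgroup.zpowers ρ := htop ▸ Subgroup.mem_top τ
  have := (isOfFinOrder_of_finite ρ).mem_powers_iff_mem_zpowers.2 hτ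
  exact Submonoid.mem_powers_iff τ ρ |>.1 this

end GalDesc
end Blocks

open GalDesc

set_option maxHeartbeats 1600000

/-- **Statement 9.** Let `k'/k` be an extension of finite fields of prime degree `ℓ`, `G` a
finite group, `b` a block idempotent of `kG`. The set of block idempotents `b'` of `k'G`
with `b'·ι(b) ≠ 0` has cardinality `1` or `ℓ`; in the latter case the action of
`Gal(k'/k)` on this set is transitive and faithful. -/
theorem blocks_over_prime_degree
    (k k' : Type) [Field k] [Field k'] [Finite k] [Finite k'] [Algebra k k']
    (ℓ : ℕ) (hℓ : ℓ.Prime) (hdeg : Module.finrank k k' = ℓ)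
    (G : Type) [Group G] [Finite G]
    (b : MonoidAlgebra k G) (hb : IsBlockIdempotent G b) :
    (({b' : MonoidAlgebra k' G |
        IsBlockIdempotent G b' ∧ b' * mapCoeffs G (algebraMap k k') b ≠ 0}).ncard = 1 ∨
     ({b' : MonoidAlgebra k' G |
        IsBlockIdempotent G b' ∧ b' * mapCoeffs G (algebraMap k k') b ≠ 0}).ncard = ℓ) ∧
    (({b' : MonoidAlgebra k' G |
        IsBlockIdempotent G b' ∧ b' * mapCoeffs G (algebraMap k k') b ≠ 0}).ncard = ℓ →
      (∀ b' b'' : MonoidAlgebra k' G,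
        b' ∈ {b' : MonoidAlgebra k' G |
          IsBlockIdempotent G b' ∧ b' * mapCoeffs G (algebraMap k k') b ≠ 0} →
        b'' ∈ {b' : MonoidAlgebra k' G |
          IsBlockIdempotent G b' ∧ b' * mapCoeffs G (algebraMap k k') b ≠ 0} →
        ∃ σ : k' ≃ₐ[k] k', mapCoeffs G (σ : k' →+* k') b' = b'') ∧
      (∀ σ : k' ≃ₐ[k] k',
        (∀ b' ∈ {b' : MonoidAlgebra k' G |
            IsBlockIdempotent G b' ∧ b' * mapCoeffs G (algebraMap k k') b ≠ 0},
          mapCoeffs G (σ : k' →+* k') b' = b') → σ = 1)) := by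
  classical
  have hfd : FiniteDimensional k k' := Module.Finite.of_finite
  set ι := mapCoeffs G (algebraMap k k') with hιdef
  set S := {b' : MonoidAlgebra k' G | IsBlockIdempotent G b' ∧ b' * ι b ≠ 0} with hSdef
  have ιinj : Function.Injective ι := mapCoeffs_injective G _ (algebraMap k k').injective
  have hιc : ι b ∈ Subalgebra.center k' (MonoidAlgebra k' G) := mapCoeffs_mem_center _ hb.1
  have hιi : IsIdempotentElem (ι b) := by
    show _ * _ = _
    rw [← map_mul, hb.2.1]
  have hιn : ι b ≠ 0 := fun h0 => hb.2.2.1 (ιinj (by rw [h0, map_zero]))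
  -- the Galois action preserves S
  have hfix_ιb : ∀ σ : k' ≃ₐ[k] k', mapCoeffs G (σ : k' →+* k') (ι b) = ι b := by
    intro σ
    have hcomp : (σ : k' →+* k').comp (algebraMap k k') = algebraMap k k' :=
      RingHom.ext fun a => σ.commutes a
    rw [hιdef, mapCoeffs_comp_apply, hcomp]
  have haction : ∀ σ : k' ≃ₐ[k] k', ∀ c ∈ S, mapCoeffs G (σ : k' →+* k') c ∈ S := by
    rintro σ c ⟨hcb, hcn⟩
    refine ⟨block_map σ hcb, ?_⟩
    show mapCoeffs G (σ : k' →+* k') c * ι b ≠ 0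
    rw [← hfix_ιb σ, ← map_mul]
    intro h0
    exact hcn (phi_inj σ (by rw [h0, map_zero]))
  -- decompose ι b into blocks
  obtain ⟨T, hT, hTsum⟩ := decomp_into_blocks (ι b) hιc hιi hιn
  have hST : S = (T : Set (MonoidAlgebra k' G)) := by
    ext c
    constructor
    · rintro ⟨hcb, hcn⟩
      by_contra hmem
      exact hcn (by rw [hTsum]; exact block_mul_finset_sum_not_mem hT hcb hmem)
    · intro hmem
      refine ⟨hT c hmem, ?_⟩
      show c * ι b ≠ 0
      rw [hTsum, block_mul_finset_sum_mem hT (hT c hmem) hmem]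
      exact (hT c hmem).2.2.1
  have hTne : T.Nonempty := by
    rcases Finset.eq_empty_or_nonempty T with h | h
    · exfalso; apply hιn; rw [hTsum, h, Finset.sum_empty]
    · exact h
  obtain ⟨b₀, hb₀T⟩ := hTne
  have hb₀S : b₀ ∈ S := by rw [hST]; exact hb₀T
  -- transitivity: S equals the Galois orbit of any of its elements
  have horbit : ∀ b' ∈ S, ∀ b'' ∈ S,
      ∃ σ : k' ≃ₐ[k] k', mapCoeffs G (σ : k' →+* k') b' = b'' := by
    intro b' hb' b'' hb''
    set O : Finset (MonoidAlgebra k' G) :=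
      Finset.univ.image (fun σ : k' ≃ₐ[k] k' => mapCoeffs G (σ : k' →+* k') b') with hO
    have hOmem : ∀ c, c ∈ O ↔ ∃ σ : k' ≃ₐ[k] k', mapCoeffs G (σ : k' →+* k') b' = c := by
      intro c
      simp [hO]
    have hOsubS : ∀ c ∈ O, c ∈ S := by
      intro c hc
      obtain ⟨σ, rfl⟩ := (hOmem c).1 hc
      exact haction σ b' hb'
    have hOblocks : ∀ c ∈ O, IsBlockIdempotent G c := fun c hc => ((hOsubS c hc)).1
    set e' : MonoidAlgebra k' G := ∑ x ∈ O, x with he'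
    -- e' is a Galois-fixed central idempotent
    have he'c : e' ∈ Subalgebra.center k' (MonoidAlgebra k' G) :=
      Subalgebra.sum_mem _ fun c hc => (hOblocks c hc).1
    have he'i : IsIdempotentElem e' := by
      show e' * e' = e'
      nth_rewrite 1 [he']
      rw [Finset.sum_mul]
      exact Finset.sum_congr rfl fun c hc => block_mul_finset_sum_mem hOblocks (hOblocks c hc) hc
    have hOimage : ∀ σ : k' ≃ₐ[k] k', O.image (mapCoeffs G (σ : k' →+* k')) = O := by
      intro σ
      apply Finset.ext
      intro c
      simp only [Finset.mem_image]
      constructor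
      · rintro ⟨d, hd, rfl⟩
        obtain ⟨τ, rfl⟩ := (hOmem d).1 hd
        exact (hOmem _).2 ⟨σ * τ, (phi_mul σ τ b').symm ▸ rfl⟩
      · intro hc
        obtain ⟨τ, rfl⟩ := (hOmem c).1 hc
        refine ⟨mapCoeffs G ((σ⁻¹ * τ : k' ≃ₐ[k] k') : k' →+* k') b',
          (hOmem _).2 ⟨σ⁻¹ * τ, rfl⟩, ?_⟩
        rw [← phi_mul, ← mul_assoc, mul_inv_cancel, one_mul]
    have he'fix : ∀ σ : k' ≃ₐ[k] k', mapCoeffs G (σ : k' →+* k') e' = e' := by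
      intro σ
      rw [he', map_sum]
      calc ∑ x ∈ O, mapCoeffs G (σ : k' →+* k') x
          = ∑ x ∈ O.image (mapCoeffs G (σ : k' →+* k')), x := by
            rw [Finset.sum_image (fun x _ y _ h => phi_inj σ h)]
        _ = ∑ x ∈ O, x := by rw [hOimage σ]
    -- descend e' to kG
    obtain ⟨c', hc'⟩ := descent he'fix
    have hc'c : c' ∈ Subalgebra.center k (MonoidAlgebra k G) := by
      rw [Subalgebra.mem_center_iff]
      intro w
      apply ιinj
      rw [map_mul, map_mul, hc']
      exact central_comm he'c (ι w)
    have hc'i : IsIdempotentElem c' := by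
      apply ιinj
      rw [map_mul, hc']
      exact he'i
    -- each block of O absorbs ι b
    have habsorb : ∀ c ∈ O, c * ι b = c := fun c hc =>
      block_mul_eq_self (hOblocks c hc) hιc hιi (hOsubS c hc).2
    have he'ιb : e' * ι b = e' := by
      rw [he', Finset.sum_mul]
      exact Finset.sum_congr rfl habsorb
    have hb'O : b' ∈ O := (hOmem b').2 ⟨1, phi_one b'⟩
    have he'n : e' ≠ 0 := by
      intro h0
      apply hb'.1.2.2.1
      rw [← block_mul_finset_sum_mem hOblocks hb'.1 hb'O, ← he', h0, mul_zero]
    -- b absorbs c', so ι b = ι b * e'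
    have hbc' : b * c' ≠ 0 := by
      intro h0
      apply he'n
      have : ι (b * c') = 0 := by rw [h0, map_zero]
      rw [map_mul, hc'] at this
      rw [← he'ιb, ← central_comm he'c (ι b), this]
    have hbc'eq : b * c' = b := block_mul_eq_self hb hc'c hc'i hbc'
    have hιbe' : ι b * e' = ι b := by
      rw [← hc', ← map_mul, hbc'eq]
    -- now b'' must lie in O
    have hb''e' : b'' * e' ≠ 0 := by
      have h1 : b'' * ι b = b'' := block_mul_eq_self hb''.1 hιc hιi hb''.2
      intro h0
      apply hb''.2
      show b'' * ι b = 0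
      rw [← hιbe', ← mul_assoc, h1, h0]
    have hb''O : b'' ∈ O := by
      by_contra hmem
      exact hb''e' (by rw [he']; exact block_mul_finset_sum_not_mem hOblocks hb''.1 hmem)
    exact (hOmem b'').1 hb''O
  -- Galois group cardinality
  have hcardΓ : Nat.card (k' ≃ₐ[k] k') = ℓ := by
    rw [IsGalois.card_aut_eq_finrank, hdeg]
  have hfinΓ : Finite (k' ≃ₐ[k] k') := Finite.of_fintype _
  -- S is the orbit of b₀
  have hSorbit : S = Set.range (fun σ : k' ≃ₐ[k] k' => mapCoeffs G (σ : k' →+* k') b₀) := by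
    ext c
    constructor
    · intro hc
      obtain ⟨σ, hσ⟩ := horbit b₀ hb₀S c hc
      exact ⟨σ, hσ⟩
    · rintro ⟨σ, rfl⟩
      exact haction σ b₀ hb₀S
  by_cases hA : ∀ σ : k' ≃ₐ[k] k', mapCoeffs G (σ : k' →+* k') b₀ = b₀
  · -- the orbit is a single point
    have hcard1 : S.ncard = 1 := by
      rw [hSorbit]
      have : Set.range (fun σ : k' ≃ₐ[k] k' => mapCoeffs G (σ : k' →+* k') b₀) = {b₀} := by
        ext c
        simp only [Set.mem_range, Set.mem_singleton_iff]
        constructor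
        · rintro ⟨σ, rfl⟩; exact hA σ
        · intro h; exact ⟨1, by rw [phi_one, h]⟩
      rw [this, Set.ncard_singleton]
    refine ⟨Or.inl hcard1, ?_⟩
    intro hcardℓ
    rw [hcard1] at hcardℓ
    exact absurd hcardℓ.symm hℓ.one_lt.ne'
  · push_neg at hA
    obtain ⟨σ₀, hσ₀⟩ := hA
    -- σ ↦ σ·b₀ is injective
    have hminj : Function.Injective
        (fun σ : k' ≃ₐ[k] k' => mapCoeffs G (σ : k' →+* k') b₀) := by
      intro σ τ h
      simp only at h
      have hρ : mapCoeffs G ((τ⁻¹ * σ : k' ≃ₐ[k] k') : k' →+* k') b₀ = b₀ := by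
        rw [phi_mul, h, ← phi_mul, inv_mul_cancel, phi_one]
      by_contra hne
      have hρne : τ⁻¹ * σ ≠ 1 := by
        intro h1
        exact hne (by rwa [inv_mul_eq_one, eq_comm] at h1)
      obtain ⟨n, hn⟩ := pow_surj_of_ne_one hℓ hcardΓ hρne σ₀
      exact hσ₀ (by rw [← hn]; exact phi_pow_fix hρ n)
    have hcardℓ : S.ncard = ℓ := by
      rw [hSorbit, ← hcardΓ]
      rw [Set.ncard_eq_toFinset_card', Set.toFinset_range]
      rw [Finset.card_image_of_injective _ hminj, Finset.card_univ, Nat.card_eq_fintype_card]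
    refine ⟨Or.inr hcardℓ, fun _ => ⟨?_, ?_⟩⟩
    · exact fun b' b'' hb' hb'' => horbit b' hb' b'' hb''
    · intro σ hσfix
      by_contra hσne
      obtain ⟨n, hn⟩ := pow_surj_of_ne_one hℓ hcardΓ hσne σ₀
      exact hσ₀ (by rw [← hn]; exact phi_pow_fix (hσfix b₀ hb₀S) n)
end
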